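/- arXiv:1607.03576 — 2 statements merged into one kernel-verified Lean document; each statement's English description precedes it below -/
import Mathlib

section
/- Let P be a dcpo satisfying condition (DL-sup): every nonempty irreducible Scott closed proper subset F of P is either a down-linear element of Irr_σ(P), or is the supremum of a directed family of down-linear elements of Irr_σ(P). Then P is SCL-faithful: for any dcpo Q with C_σ(P) order isomorphic to C_σ(Q), P is order isomorphic to Q. -/
def ScottClosed {α : Type*} [Preorder α] (A : Set α) : Prop :=
  IsLowerSet A ∧ ∀ D ⊆ A, D.Nonempty → DirectedOn (· ≤ ·) D → ∀ a, IsLUB D a → a ∈ A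

def DirectedComplete (α : Type*) [Preorder α] : Prop :=
  ∀ D : Set α, D.Nonempty → DirectedOn (· ≤ ·) D → ∃ a, IsLUB D a

abbrev Cσ (P : Type*) [Preorder P] := {A : Set P // ScottClosed A}

def Beneath {L : Type*} [Preorder L] (a b : L) : Prop :=
  ∀ S : Set L, S.Nonempty → ScottClosed S → ∀ t, IsLUB S t → b ≤ t → a ∈ S

def CCompact {L : Type*} [Preorder L] (a : L) : Prop := Beneath a a

def ScottIrred {α : Type*} [Preorder α] (F : Set α) : Prop :=
  F.Nonempty ∧ ∀ F₁ F₂ : Set α, ScottClosed F₁ → ScottClosed F₂ →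
    F ⊆ F₁ ∪ F₂ → F ⊆ F₁ ∨ F ⊆ F₂

/-- The dcpo of nonempty irreducible Scott closed subsets of `P`. -/
abbrev Irrσ (P : Type*) [Preorder P] := {F : Set P // ScottClosed F ∧ ScottIrred F}

/-- `F` is down-linear in `Irr_σ(P)`: the elements below it form a chain. -/
def DownLinear {P : Type*} [Preorder P] (F : Irrσ P) : Prop :=
  ∀ G H : Irrσ P, G ≤ F → H ≤ F → G ≤ H ∨ H ≤ G

section Basic
variable {P : Type*} [PartialOrder P]

lemma scottClosed_empty : ScottClosed (∅ : Set P) :=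
  ⟨fun _ _ _ h => h, fun _ hD hne _ _ _ => absurd (hD hne.choose_spec) (by simp)⟩

lemma scottClosed_univ : ScottClosed (Set.univ : Set P) :=
  ⟨fun _ _ _ _ => trivial, fun _ _ _ _ _ _ => trivial⟩

lemma scottClosed_Iic (x : P) : ScottClosed (Set.Iic x) :=
  ⟨fun _ _ hba ha => le_trans hba ha, fun D hD _ _ a ha => ha.2 fun d hd => hD hd⟩

lemma scottIrred_Iic (x : P) : ScottIrred (Set.Iic x) := by
  refine ⟨⟨x, le_refl x⟩, fun F₁ F₂ h1 h2 hsub => ?_⟩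
  rcases hsub (Set.mem_Iic.2 (le_refl x)) with h | h
  · exact Or.inl fun y hy => h1.1 hy h
  · exact Or.inr fun y hy => h2.1 hy h

lemma scottClosed_union {A B : Set P} (hA : ScottClosed A) (hB : ScottClosed B) :
    ScottClosed (A ∪ B) := by
  refine ⟨hA.1.union hB.1, fun D hD hne hdir a ha => ?_⟩
  have hcof : (∀ d ∈ D, ∃ e ∈ D, d ≤ e ∧ e ∈ A) ∨ (∀ d ∈ D, ∃ e ∈ D, d ≤ e ∧ e ∈ B) := by
    by_contra h
    push_neg at h
    obtain ⟨⟨d₁, hd₁, h₁⟩, ⟨d₂, hd₂, h₂⟩⟩ := h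
    obtain ⟨e, he, he₁, he₂⟩ := hdir d₁ hd₁ d₂ hd₂
    rcases hD he with hc | hc
    · exact h₁ e he he₁ hc
    · exact h₂ e he he₂ hc
  -- symmetric treatment
  have key : ∀ (C : Set P), ScottClosed C → (∀ d ∈ D, ∃ e ∈ D, d ≤ e ∧ e ∈ C) → a ∈ C := by
    intro C hC hcofC
    set D' := {e ∈ D | e ∈ C} with hD'
    obtain ⟨d0, hd0⟩ := hne
    obtain ⟨e0, he0, _, he0C⟩ := hcofC d0 hd0
    have hne' : D'.Nonempty := ⟨e0, he0, he0C⟩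
    have hdir' : DirectedOn (· ≤ ·) D' := by
      rintro x ⟨hx, hxC⟩ y ⟨hy, hyC⟩
      obtain ⟨f, hf, hxf, hyf⟩ := hdir x hx y hy
      obtain ⟨e, he, hfe, heC⟩ := hcofC f hf
      exact ⟨e, ⟨he, heC⟩, hxf.trans hfe, hyf.trans hfe⟩
    have hlub' : IsLUB D' a := by
      constructor
      · exact fun e he => ha.1 he.1
      · intro u hu
        refine ha.2 fun d hd => ?_
        obtain ⟨e, he, hde, heC⟩ := hcofC d hd
        exact hde.trans (hu ⟨he, heC⟩)
    exact hC.2 D' (fun e he => he.2) hne' hdir' a hlub'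
  rcases hcof with h | h
  · exact Or.inl (key A hA h)
  · exact Or.inr (key B hB h)

end Basic

section CsigmaLemmas
variable {P : Type*} [PartialOrder P]

/-- The empty set as element of `Cσ P`. -/
def botC (P : Type*) [PartialOrder P] : Cσ P := ⟨∅, scottClosed_empty⟩

def topC (P : Type*) [PartialOrder P] : Cσ P := ⟨Set.univ, scottClosed_univ⟩

def iicC (x : P) : Cσ P := ⟨Set.Iic x, scottClosed_Iic x⟩

lemma csigma_isTop_iff (F : Cσ P) : IsTop F ↔ F.1 = Set.univ := by
  constructor
  · intro h
    have := h (topC P)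
    exact Set.eq_univ_of_univ_subset this
  · intro h G
    show G.1 ⊆ F.1
    rw [h]; exact Set.subset_univ _

lemma csigma_isBot_iff (F : Cσ P) : IsBot F ↔ F.1 = ∅ := by
  constructor
  · intro h
    have : F.1 ⊆ ∅ := h (botC P)
    exact Set.subset_eq_empty this rfl
  · intro h G
    show F.1 ⊆ G.1
    rw [h]; exact Set.empty_subset _

def unionC (A B : Cσ P) : Cσ P := ⟨A.1 ∪ B.1, scottClosed_union A.2 B.2⟩

lemma isLUB_pair_unionC (A B : Cσ P) : IsLUB {A, B} (unionC A B) := by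
  constructor
  · rintro C hC
    rcases hC with rfl | hC
    · exact Set.subset_union_left
    · rw [Set.mem_singleton_iff] at hC; subst hC
      exact Set.subset_union_right
  · intro G hG
    have hA : A.1 ⊆ G.1 := hG (by simp)
    have hB : B.1 ⊆ G.1 := hG (by simp)
    exact Set.union_subset hA hB

/-- Order-theoretic (iso-invariant) version of irreducibility. -/
def IrredO {L : Type*} [Preorder L] (F : L) : Prop :=
  (¬ IsBot F) ∧ ∀ A B J : L, IsLUB {A, B} J → F ≤ J → F ≤ A ∨ F ≤ B

lemma irredO_iff (F : Cσ P) : IrredO F ↔ ScottIrred F.1 := by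
  constructor
  · rintro ⟨hb, hc⟩
    have hne : F.1.Nonempty := by
      rw [Set.nonempty_iff_ne_empty]
      intro h; exact hb ((csigma_isBot_iff F).2 h)
    refine ⟨hne, fun F₁ F₂ h1 h2 hsub => ?_⟩
    have := hc ⟨F₁, h1⟩ ⟨F₂, h2⟩ (unionC ⟨F₁, h1⟩ ⟨F₂, h2⟩)
      (isLUB_pair_unionC _ _) hsub
    exact this
  · rintro ⟨hne, hirr⟩
    constructor
    · intro hb
      rw [csigma_isBot_iff] at hb
      rw [hb] at hne
      exact Set.not_nonempty_empty hne
    · intro A B J hJ hFJ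
      have : J = unionC A B := hJ.unique (isLUB_pair_unionC A B)
      subst this
      exact hirr A.1 B.1 A.2 B.2 hFJ

end CsigmaLemmas

section Main
variable {P : Type*} [PartialOrder P]

/-- A down-linear irreducible closed set in a dcpo is a principal ideal. -/
lemma downLinear_pt (hP : DirectedComplete P) (F : Irrσ P) (h : DownLinear F) :
    ∃ x, F.1 = Set.Iic x := by
  have hne : F.1.Nonempty := F.2.2.1
  have hdir : DirectedOn (· ≤ ·) F.1 := by
    intro c hc c' hc'
    have hIc : (⟨Set.Iic c, scottClosed_Iic c, scottIrred_Iic c⟩ : Irrσ P) ≤ F :=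
      fun y hy => F.2.1.1 hy hc
    have hIc' : (⟨Set.Iic c', scottClosed_Iic c', scottIrred_Iic c'⟩ : Irrσ P) ≤ F :=
      fun y hy => F.2.1.1 hy hc'
    rcases h _ _ hIc hIc' with hle | hle
    · exact ⟨c', hc', (hle (le_refl c) : c ≤ c'), le_refl c'⟩
    · exact ⟨c, hc, le_refl c, (hle (le_refl c') : c' ≤ c)⟩
  obtain ⟨a, ha⟩ := hP F.1 hne hdir
  have haF : a ∈ F.1 := F.2.1.2 F.1 (le_refl _) hne hdir a ha
  refine ⟨a, subset_antisymm (fun y hy => ha.1 hy) (fun y hy => F.2.1.1 hy haF)⟩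

/-- MAIN: under (DL-sup), every proper irreducible closed set is a principal ideal. -/
lemma main_pt (hP : DirectedComplete P)
    (hDL : ∀ F : Irrσ P, F.1 ≠ Set.univ →
      DownLinear F ∨ ∃ 𝒟 : Set (Irrσ P), 𝒟.Nonempty ∧ DirectedOn (· ≤ ·) 𝒟 ∧
        (∀ G ∈ 𝒟, DownLinear G) ∧ IsLUB 𝒟 F)
    (F : Irrσ P) (hF : F.1 ≠ Set.univ) : ∃ x, F.1 = Set.Iic x := by
  rcases hDL F hF with h | ⟨𝒟, hne, hdir, hdl, hlub⟩
  · exact downLinear_pt hP F h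
  · -- every member of 𝒟 is a principal ideal
    have hpt : ∀ G ∈ 𝒟, ∃ x, G.1 = Set.Iic x := fun G hG => downLinear_pt hP G (hdl G hG)
    set D₀ : Set P := {x | ∃ G ∈ 𝒟, G.1 = Set.Iic x} with hD₀
    have hne₀ : D₀.Nonempty := by
      obtain ⟨G, hG⟩ := hne
      obtain ⟨x, hx⟩ := hpt G hG
      exact ⟨x, G, hG, hx⟩
    have hdir₀ : DirectedOn (· ≤ ·) D₀ := by
      rintro x ⟨G, hG, hGx⟩ y ⟨H, hH, hHy⟩
      obtain ⟨K, hK, hGK, hHK⟩ := hdir G hG H hH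
      obtain ⟨z, hKz⟩ := hpt K hK
      refine ⟨z, ⟨K, hK, hKz⟩, ?_, ?_⟩
      · have : Set.Iic x ⊆ Set.Iic z := by rw [← hGx, ← hKz]; exact hGK
        exact this (le_refl x)
      · have : Set.Iic y ⊆ Set.Iic z := by rw [← hHy, ← hKz]; exact hHK
        exact this (le_refl y)
    obtain ⟨a, ha⟩ := hP D₀ hne₀ hdir₀
    have hGstar : IsLUB 𝒟 (⟨Set.Iic a, scottClosed_Iic a, scottIrred_Iic a⟩ : Irrσ P) := by
      constructor
      · intro G hG
        obtain ⟨x, hx⟩ := hpt G hG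
        show G.1 ⊆ Set.Iic a
        rw [hx]
        exact fun y hy => le_trans hy (ha.1 ⟨G, hG, hx⟩)
      · intro E hE
        show Set.Iic a ⊆ E.1
        have hD₀E : D₀ ⊆ E.1 := by
          rintro x ⟨G, hG, hGx⟩
          have : G.1 ⊆ E.1 := hE hG
          rw [hGx] at this
          exact this (le_refl x)
        have haE : a ∈ E.1 := E.2.1.2 D₀ hD₀E hne₀ hdir₀ a ha
        exact fun y hy => E.2.1.1 hy haE
    have : F = ⟨Set.Iic a, scottClosed_Iic a, scottIrred_Iic a⟩ := hlub.unique hGstar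
    exact ⟨a, by rw [this]⟩

end Main

section Transfer
variable {L M : Type*} [Preorder L] [Preorder M]

lemma isTop_map (e : L ≃o M) {x : L} (h : IsTop x) : IsTop (e x) := by
  intro y
  have := h (e.symm y)
  have h2 := e.le_iff_le.2 this
  rwa [e.apply_symm_apply] at h2

lemma isBot_map (e : L ≃o M) {x : L} (h : IsBot x) : IsBot (e x) := by
  intro y
  have := h (e.symm y)
  have h2 := e.le_iff_le.2 this
  rwa [e.apply_symm_apply] at h2

lemma isLUB_map (e : L ≃o M) {s : Set L} {x : L} (h : IsLUB s x) : IsLUB (e '' s) (e x) := by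
  constructor
  · rintro _ ⟨y, hy, rfl⟩
    exact e.le_iff_le.2 (h.1 hy)
  · intro b hb
    rw [← e.apply_symm_apply b, e.le_iff_le]
    refine h.2 fun y hy => ?_
    rw [← e.le_iff_le, e.apply_symm_apply]
    exact hb ⟨y, hy, rfl⟩

lemma irredO_map (e : L ≃o M) {x : L} (h : IrredO x) : IrredO (e x) := by
  constructor
  · intro hb
    apply h.1
    have := isBot_map e.symm hb
    rwa [e.symm_apply_apply] at this
  · intro A B J hJ hxJ
    have himg : {A, B} = e '' {e.symm A, e.symm B} := by
      rw [Set.image_pair, e.apply_symm_apply, e.apply_symm_apply]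
    have hJ' : IsLUB {e.symm A, e.symm B} (e.symm J) := by
      have := isLUB_map e.symm hJ
      rwa [Set.image_pair] at this
    have hxJ' : x ≤ e.symm J := by
      rw [← e.le_iff_le, e.apply_symm_apply]; exact hxJ
    rcases h.2 _ _ _ hJ' hxJ' with hc | hc
    · left; rw [← e.apply_symm_apply A]; exact e.le_iff_le.2 hc
    · right; rw [← e.apply_symm_apply B]; exact e.le_iff_le.2 hc

lemma directedOn_map (e : L ≃o M) {s : Set L} (h : DirectedOn (· ≤ ·) s) :
    DirectedOn (· ≤ ·) (e '' s) := by
  rintro _ ⟨x, hx, rfl⟩ _ ⟨y, hy, rfl⟩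
  obtain ⟨z, hz, hxz, hyz⟩ := h x hx y hy
  exact ⟨e z, ⟨z, hz, rfl⟩, e.le_iff_le.2 hxz, e.le_iff_le.2 hyz⟩

/-- χ: order-invariant property of `Cσ P` equivalent (under DL-sup) to `P` having a top. -/
def Chi (L : Type*) [Preorder L] : Prop :=
  (∃ 𝒟 : Set L, 𝒟.Nonempty ∧ DirectedOn (· ≤ ·) 𝒟 ∧ (∀ F ∈ 𝒟, IrredO F ∧ ¬ IsTop F) ∧
    ∃ t, IsTop t ∧ IsLUB 𝒟 t)
  ∨ (∃ M : L, ¬ IsTop M ∧ ∀ A, ¬ IsTop A → A ≤ M)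

lemma chi_map (e : L ≃o M) (h : Chi L) : Chi M := by
  have htop_iff : ∀ x : L, IsTop (e x) ↔ IsTop x := by
    intro x
    constructor
    · intro ht
      have := isTop_map e.symm ht
      rwa [e.symm_apply_apply] at this
    · exact isTop_map e
  rcases h with ⟨𝒟, hne, hdir, hmem, t, ht, hlub⟩ | ⟨N, hN, hmax⟩
  · left
    refine ⟨e '' 𝒟, hne.image e, directedOn_map e hdir, ?_, e t, isTop_map e ht, isLUB_map e hlub⟩
    rintro _ ⟨F, hF, rfl⟩
    exact ⟨irredO_map e (hmem F hF).1, fun hc => (hmem F hF).2 ((htop_iff F).1 hc)⟩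
  · right
    refine ⟨e N, fun hc => hN ((htop_iff N).1 hc), ?_⟩
    intro A hA
    rw [← e.apply_symm_apply A]
    apply e.le_iff_le.2
    apply hmax
    intro hc
    exact hA (by rw [← e.apply_symm_apply A]; exact isTop_map e hc)

end Transfer

section TopChar
variable {P : Type*} [PartialOrder P]

lemma chi_iff_top (hP : DirectedComplete P)
    (hmain : ∀ F : Irrσ P, F.1 ≠ Set.univ → ∃ x, F.1 = Set.Iic x) :
    Chi (Cσ P) ↔ ∃ t : P, ∀ y, y ≤ t := by
  constructor
  · rintro (⟨𝒟, hne, hdir, hmem, t, ht, hlub⟩ | ⟨N, hN, hmax⟩)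
    · -- directed family of proper irreducibles with lub = top
      have hpt : ∀ F ∈ 𝒟, ∃ x, F.1 = Set.Iic x := by
        intro F hF
        have hirr : ScottIrred F.1 := (irredO_iff F).1 (hmem F hF).1
        have hprop : F.1 ≠ Set.univ := fun hc => (hmem F hF).2 ((csigma_isTop_iff F).2 hc)
        exact hmain ⟨F.1, F.2, hirr⟩ hprop
      set D₀ : Set P := {x | ∃ F ∈ 𝒟, F.1 = Set.Iic x} with hD₀
      have hne₀ : D₀.Nonempty := by
        obtain ⟨F, hF⟩ := hne
        obtain ⟨x, hx⟩ := hpt F hF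
        exact ⟨x, F, hF, hx⟩
      have hdir₀ : DirectedOn (· ≤ ·) D₀ := by
        rintro x ⟨G, hG, hGx⟩ y ⟨H, hH, hHy⟩
        obtain ⟨K, hK, hGK, hHK⟩ := hdir G hG H hH
        obtain ⟨z, hKz⟩ := hpt K hK
        refine ⟨z, ⟨K, hK, hKz⟩, ?_, ?_⟩
        · have : Set.Iic x ⊆ Set.Iic z := by rw [← hGx, ← hKz]; exact hGK
          exact this (le_refl x)
        · have : Set.Iic y ⊆ Set.Iic z := by rw [← hHy, ← hKz]; exact hHK
          exact this (le_refl y)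
      obtain ⟨a, ha⟩ := hP D₀ hne₀ hdir₀
      have hub : iicC a ∈ upperBounds 𝒟 := by
        intro F hF
        obtain ⟨x, hx⟩ := hpt F hF
        show F.1 ⊆ Set.Iic a
        rw [hx]
        exact fun y hy => le_trans hy (ha.1 ⟨F, hF, hx⟩)
      have := hlub.2 hub
      have htuniv : t.1 = Set.univ := (csigma_isTop_iff t).1 ht
      have : Set.univ ⊆ Set.Iic a := by rw [← htuniv]; exact this
      exact ⟨a, fun y => this trivial⟩
    · -- maximum proper element exists
      by_cases hx : ∃ x : P, IsTop (iicC x)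
      · obtain ⟨x, hx⟩ := hx
        have := (csigma_isTop_iff _).1 hx
        exact ⟨x, fun y => by
          have hy : y ∈ (iicC x).1 := by rw [this]; trivial
          exact hy⟩
      · push_neg at hx
        exfalso
        apply hN
        rw [csigma_isTop_iff]
        apply Set.eq_univ_of_forall
        intro x
        have : iicC x ≤ N := hmax _ (hx x)
        exact this (le_refl x)
  · rintro ⟨t, ht⟩
    by_cases hcl : ScottClosed {y : P | y ≠ t}
    · right
      refine ⟨⟨{y : P | y ≠ t}, hcl⟩, ?_, ?_⟩
      · intro hc
        have h1 := (csigma_isTop_iff _).1 hc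
        have h2 : t ∈ (⟨{y : P | y ≠ t}, hcl⟩ : Cσ P).1 := by rw [h1]; trivial
        exact h2 rfl
      · intro A hA
        show A.1 ⊆ {y : P | y ≠ t}
        intro x hxA
        intro hxt
        subst hxt
        apply hA
        rw [csigma_isTop_iff]
        apply Set.eq_univ_of_forall
        exact fun y => A.2.1 (ht y) hxA
    · left
      have hlower : IsLowerSet {y : P | y ≠ t} := by
        intro a b hba ha hbt
        subst hbt
        exact ha (le_antisymm (ht a) hba)
      rw [ScottClosed, not_and] at hcl
      have := hcl hlower
      push_neg at this
      obtain ⟨D, hD, hne, hdir, a, hlub, hat⟩ := this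
      have hat : a = t := not_not.1 hat
      subst hat
      refine ⟨(fun d => iicC d) '' D, hne.image _, ?_, ?_, topC P, ?_, ?_⟩
      · rintro _ ⟨x, hx, rfl⟩ _ ⟨y, hy, rfl⟩
        obtain ⟨z, hz, hxz, hyz⟩ := hdir x hx y hy
        exact ⟨iicC z, ⟨z, hz, rfl⟩, fun w hw => le_trans hw hxz, fun w hw => le_trans hw hyz⟩
      · rintro _ ⟨d, hd, rfl⟩
        constructor
        · exact (irredO_iff _).2 (scottIrred_Iic d)
        · intro hc
          have h1 := (csigma_isTop_iff _).1 hc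
          have hta : a ∈ ((fun d => iicC d) d).1 := by rw [h1]; trivial
          exact hD hd (le_antisymm (ht d) hta)
      · intro G
        show G.1 ⊆ Set.univ
        exact Set.subset_univ _
      · constructor
        · rintro _ ⟨d, hd, rfl⟩
          show Set.Iic d ⊆ Set.univ
          exact Set.subset_univ _
        · intro E hE
          show Set.univ ⊆ E.1
          have hDE : D ⊆ E.1 := by
            intro d hd
            have : iicC d ≤ E := hE ⟨d, hd, rfl⟩
            exact this (le_refl d)
          have haE : a ∈ E.1 := E.2.2 D hDE hne hdir a hlub
          intro y _
          exact E.2.1 (ht y) haE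
  
end TopChar

section Iso
variable {P Q : Type*} [PartialOrder P] [PartialOrder Q]

/-- `P` is order isomorphic to any set of Scott closed sets consisting precisely of
principal ideals (containing all of them). -/
noncomputable def ptsIso (S : Set (Cσ P))
    (hmem : ∀ x : P, iicC x ∈ S)
    (hsur : ∀ F ∈ S, ∃ x : P, F.1 = Set.Iic x) :
    P ≃o {F : Cσ P // F ∈ S} :=
{ toFun := fun x => ⟨iicC x, hmem x⟩,
  invFun := fun F => (hsur F.1 F.2).choose,
  left_inv := fun x => by
    have h := (hsur (iicC x) (hmem x)).choose_spec
    exact (Set.Iic_injective (h : Set.Iic x = _)).symm,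
  right_inv := fun F => by
    have h := (hsur F.1 F.2).choose_spec
    apply Subtype.ext; apply Subtype.ext
    exact h.symm,
  map_rel_iff' := by
    intro a b
    constructor
    · intro h
      exact (h : Set.Iic a ⊆ Set.Iic b) (le_refl a)
    · intro h
      show Set.Iic a ⊆ Set.Iic b
      exact fun y hy => le_trans hy h }

def restIso (e : Cσ P ≃o Cσ Q) (S : Set (Cσ P)) (T : Set (Cσ Q))
    (hST : ∀ F, F ∈ S ↔ e F ∈ T) :
    {F : Cσ P // F ∈ S} ≃o {G : Cσ Q // G ∈ T} :=
{ toFun := fun F => ⟨e F.1, (hST F.1).1 F.2⟩,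
  invFun := fun G => ⟨e.symm G.1, by
    rw [hST (e.symm G.1), e.apply_symm_apply]; exact G.2⟩,
  left_inv := fun F => by apply Subtype.ext; simp,
  right_inv := fun G => by apply Subtype.ext; simp,
  map_rel_iff' := by
    intro F G
    show e F.1 ≤ e G.1 ↔ _
    rw [e.le_iff_le]
    rfl }

lemma downLinear_map (e : Irrσ P ≃o Irrσ Q) {F : Irrσ P} (h : DownLinear F) :
    DownLinear (e F) := by
  intro G' H' hG hH
  have hG2 : e.symm G' ≤ F := by
    rw [← e.le_iff_le, e.apply_symm_apply]; exact hG
  have hH2 : e.symm H' ≤ F := by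
    rw [← e.le_iff_le, e.apply_symm_apply]; exact hH
  rcases h _ _ hG2 hH2 with hc | hc
  · left
    have := e.le_iff_le.2 hc
    rwa [e.apply_symm_apply, e.apply_symm_apply] at this
  · right
    have := e.le_iff_le.2 hc
    rwa [e.apply_symm_apply, e.apply_symm_apply] at this

end Iso

universe u

/-- A dcpo satisfying condition (DL-sup) is SCL-faithful. -/
theorem DLsup_SCL_faithful {P : Type u} [PartialOrder P] (hP : DirectedComplete P)
    (hDL : ∀ F : Irrσ P, F.1 ≠ Set.univ →
      DownLinear F ∨ ∃ 𝒟 : Set (Irrσ P), 𝒟.Nonempty ∧ DirectedOn (· ≤ ·) 𝒟 ∧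
        (∀ G ∈ 𝒟, DownLinear G) ∧ IsLUB 𝒟 F) :
    ∀ (Q : Type u) [PartialOrder Q], DirectedComplete Q →
      (Cσ P ≃o Cσ Q) → Nonempty (P ≃o Q) := by
  intro Q instQ hQ Ψ
  classical
  have irredT : ∀ F : Cσ P, ScottIrred F.1 → ScottIrred (Ψ F).1 := fun F h =>
    (irredO_iff _).1 (irredO_map Ψ ((irredO_iff F).2 h))
  have irredT' : ∀ G : Cσ Q, ScottIrred G.1 → ScottIrred (Ψ.symm G).1 := fun G h =>
    (irredO_iff _).1 (irredO_map Ψ.symm ((irredO_iff G).2 h))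
  have htopIff : ∀ F : Cσ P, IsTop (Ψ F) ↔ IsTop F := by
    intro F
    constructor
    · intro h
      have := isTop_map Ψ.symm h
      rwa [Ψ.symm_apply_apply] at this
    · exact isTop_map Ψ
  let eIrr : Irrσ P ≃o Irrσ Q :=
  { toFun := fun F => ⟨(Ψ ⟨F.1, F.2.1⟩).1, (Ψ ⟨F.1, F.2.1⟩).2, irredT ⟨F.1, F.2.1⟩ F.2.2⟩,
    invFun := fun G => ⟨(Ψ.symm ⟨G.1, G.2.1⟩).1, (Ψ.symm ⟨G.1, G.2.1⟩).2,
      irredT' ⟨G.1, G.2.1⟩ G.2.2⟩,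
    left_inv := fun F => by
      refine Subtype.ext ?_
      show (Ψ.symm (Ψ ⟨F.1, F.2.1⟩)).1 = F.1
      rw [Ψ.symm_apply_apply],
    right_inv := fun G => by
      refine Subtype.ext ?_
      show (Ψ (Ψ.symm ⟨G.1, G.2.1⟩)).1 = G.1
      rw [Ψ.apply_symm_apply],
    map_rel_iff' := by
      intro F G
      show ((Ψ ⟨F.1, F.2.1⟩) : Cσ Q).1 ≤ (Ψ ⟨G.1, G.2.1⟩).1 ↔ _
      rw [show ((Ψ ⟨F.1, F.2.1⟩).1 ≤ (Ψ ⟨G.1, G.2.1⟩).1) ↔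
        (Ψ (⟨F.1, F.2.1⟩ : Cσ P) ≤ Ψ ⟨G.1, G.2.1⟩) from Iff.rfl, Ψ.le_iff_le]
      exact Iff.rfl }
  have huniv : ∀ F : Irrσ P, ((eIrr F).1 = Set.univ ↔ F.1 = Set.univ) := by
    intro F
    show ((Ψ ⟨F.1, F.2.1⟩).1 = Set.univ ↔ F.1 = Set.univ)
    constructor
    · intro h
      exact (csigma_isTop_iff (⟨F.1, F.2.1⟩ : Cσ P)).1
        ((htopIff _).1 ((csigma_isTop_iff _).2 h))
    · intro h
      exact (csigma_isTop_iff _).1 ((htopIff _).2 ((csigma_isTop_iff (⟨F.1, F.2.1⟩ : Cσ P)).2 h))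
  have hDL_Q : ∀ F' : Irrσ Q, F'.1 ≠ Set.univ →
      DownLinear F' ∨ ∃ 𝒟 : Set (Irrσ Q), 𝒟.Nonempty ∧ DirectedOn (· ≤ ·) 𝒟 ∧
        (∀ G ∈ 𝒟, DownLinear G) ∧ IsLUB 𝒟 F' := by
    intro F' hF'
    have hFF : eIrr (eIrr.symm F') = F' := eIrr.apply_symm_apply F'
    have hprop : (eIrr.symm F').1 ≠ Set.univ := fun hc => hF' (by
      have := (huniv (eIrr.symm F')).2 hc
      rwa [hFF] at this)
    rcases hDL (eIrr.symm F') hprop with h | ⟨𝒟, hne, hdir, hdl, hlub⟩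
    · left
      have := downLinear_map eIrr h
      rwa [hFF] at this
    · right
      refine ⟨eIrr '' 𝒟, hne.image _, directedOn_map eIrr hdir, ?_, ?_⟩
      · rintro _ ⟨G, hG, rfl⟩
        exact downLinear_map eIrr (hdl G hG)
      · have := isLUB_map eIrr hlub
        rwa [hFF] at this
  have mainP := main_pt hP hDL
  have mainQ := main_pt hQ hDL_Q
  have topIff : (∃ t : P, ∀ y, y ≤ t) ↔ (∃ t : Q, ∀ y, y ≤ t) := by
    rw [← chi_iff_top hP mainP, ← chi_iff_top hQ mainQ]
    exact ⟨chi_map Ψ, chi_map Ψ.symm⟩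
  by_cases htop : ∃ t : P, ∀ y, y ≤ t
  · -- both have top elements
    obtain ⟨t, ht⟩ := htop
    obtain ⟨t', ht'⟩ := topIff.1 ⟨t, ht⟩
    have hST : ∀ F : Cσ P, F ∈ {F : Cσ P | ScottIrred F.1} ↔
        Ψ F ∈ {G : Cσ Q | ScottIrred G.1} := by
      intro F
      constructor
      · exact irredT F
      · intro h
        have := irredT' _ h
        rwa [Ψ.symm_apply_apply] at this
    have hmemP : ∀ x : P, iicC x ∈ {F : Cσ P | ScottIrred F.1} := fun x => scottIrred_Iic x
    have hmemQ : ∀ x : Q, iicC x ∈ {G : Cσ Q | ScottIrred G.1} := fun x => scottIrred_Iic x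
    have hsurP : ∀ F ∈ {F : Cσ P | ScottIrred F.1}, ∃ x : P, F.1 = Set.Iic x := by
      intro F hF
      by_cases hu : F.1 = Set.univ
      · exact ⟨t, by rw [hu]; ext y; simp [ht y]⟩
      · exact mainP ⟨F.1, F.2, hF⟩ hu
    have hsurQ : ∀ G ∈ {G : Cσ Q | ScottIrred G.1}, ∃ x : Q, G.1 = Set.Iic x := by
      intro G hG
      by_cases hu : G.1 = Set.univ
      · exact ⟨t', by rw [hu]; ext y; simp [ht' y]⟩
      · exact mainQ ⟨G.1, G.2, hG⟩ hu
    exact ⟨(ptsIso _ hmemP hsurP).trans ((restIso Ψ _ _ hST).trans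
      (ptsIso _ hmemQ hsurQ).symm)⟩
  · -- neither has a top element
    have htopQ : ¬ ∃ t : Q, ∀ y, y ≤ t := fun h => htop (topIff.2 h)
    have hST : ∀ F : Cσ P, F ∈ {F : Cσ P | ScottIrred F.1 ∧ ¬ IsTop F} ↔
        Ψ F ∈ {G : Cσ Q | ScottIrred G.1 ∧ ¬ IsTop G} := by
      intro F
      constructor
      · rintro ⟨h1, h2⟩
        exact ⟨irredT F h1, fun hc => h2 ((htopIff F).1 hc)⟩
      · rintro ⟨h1, h2⟩
        refine ⟨?_, fun hc => h2 ((htopIff F).2 hc)⟩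
        have := irredT' _ h1
        rwa [Ψ.symm_apply_apply] at this
    have hmemP : ∀ x : P, iicC x ∈ {F : Cσ P | ScottIrred F.1 ∧ ¬ IsTop F} := by
      intro x
      refine ⟨scottIrred_Iic x, fun hc => htop ?_⟩
      have h1 := (csigma_isTop_iff _).1 hc
      exact ⟨x, fun y => by
        have h2 : y ∈ (iicC x).1 := by rw [h1]; trivial
        exact h2⟩
    have hmemQ : ∀ x : Q, iicC x ∈ {G : Cσ Q | ScottIrred G.1 ∧ ¬ IsTop G} := by
      intro x
      refine ⟨scottIrred_Iic x, fun hc => htopQ ?_⟩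
      have h1 := (csigma_isTop_iff _).1 hc
      exact ⟨x, fun y => by
        have h2 : y ∈ (iicC x).1 := by rw [h1]; trivial
        exact h2⟩
    have hsurP : ∀ F ∈ {F : Cσ P | ScottIrred F.1 ∧ ¬ IsTop F}, ∃ x : P, F.1 = Set.Iic x := by
      rintro F ⟨h1, h2⟩
      exact mainP ⟨F.1, F.2, h1⟩ (fun hc => h2 ((csigma_isTop_iff F).2 hc))
    have hsurQ : ∀ G ∈ {G : Cσ Q | ScottIrred G.1 ∧ ¬ IsTop G}, ∃ x : Q, G.1 = Set.Iic x := by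
      rintro G ⟨h1, h2⟩
      exact mainQ ⟨G.1, G.2, h1⟩ (fun hc => h2 ((csigma_isTop_iff G).2 hc))
    exact ⟨(ptsIso _ hmemP hsurP).trans ((restIso Ψ _ _ hST).trans
      (ptsIso _ hmemQ hsurQ).symm)⟩
end

section
/- If P is an SCL-faithful dcpo, then the dcpo P* obtained by adjoining a new top element to P is also SCL-faithful. -/
universe u

/-- `P` is SCL-faithful: for any dcpo `Q`, an order isomorphism between the lattices
of Scott closed sets yields an order isomorphism between `P` and `Q`. -/
def SCLFaithful (P : Type u) [PartialOrder P] : Prop :=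
  ∀ (Q : Type u) [PartialOrder Q], DirectedComplete Q →
    (Cσ P ≃o Cσ Q) → Nonempty (P ≃o Q)

section Helpers

lemma scottClosed_univ_s19 {α : Type*} [Preorder α] : ScottClosed (Set.univ : Set α) :=
  ⟨fun _ _ _ _ => trivial, fun _ _ _ _ _ _ => trivial⟩

lemma scottClosed_Iic_s19 {α : Type*} [Preorder α] (x : α) : ScottClosed (Set.Iic x) :=
  ⟨fun _ _ h ha => h.trans ha, fun D hD _ _ a ha => ha.2 fun d hd => hD hd⟩

variable {P : Type*} [PartialOrder P]

lemma isLUB_image_coe {D : Set P} {b : P} (h : IsLUB D b) :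
    IsLUB ((↑) '' D : Set (WithTop P)) (↑b) := by
  constructor
  · rintro _ ⟨d, hd, rfl⟩
    exact WithTop.coe_le_coe.mpr (h.1 hd)
  · rintro u hu
    cases u with
    | top => exact le_top
    | coe c =>
      exact WithTop.coe_le_coe.mpr (h.2 fun d hd => WithTop.coe_le_coe.mp (hu ⟨d, hd, rfl⟩))

lemma directedOn_preimage_coe {D : Set (WithTop P)} (hdir : DirectedOn (· ≤ ·) D)
    (htop : (⊤ : WithTop P) ∉ D) : DirectedOn (· ≤ ·) {p : P | (↑p : WithTop P) ∈ D} := by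
  intro p hp q hq
  obtain ⟨z, hz, hpz, hqz⟩ := hdir _ hp _ hq
  cases z with
  | top => exact absurd hz htop
  | coe r => exact ⟨r, hz, WithTop.coe_le_coe.mp hpz, WithTop.coe_le_coe.mp hqz⟩

lemma image_preimage_coe {D : Set (WithTop P)} (htop : (⊤ : WithTop P) ∉ D) :
    (↑) '' {p : P | (↑p : WithTop P) ∈ D} = D := by
  ext x
  cases x with
  | top => simp [htop]
  | coe p => simp

/-- With `hP`, the lub of a directed set of non-top elements is not top, and is the
image of the lub of the preimage. -/
lemma lub_of_ne_top (hP : DirectedComplete P) {D : Set (WithTop P)} (htop : (⊤ : WithTop P) ∉ D)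
    (hne : D.Nonempty) (hdir : DirectedOn (· ≤ ·) D) {a : WithTop P} (ha : IsLUB D a) :
    ∃ b : P, a = ↑b ∧ IsLUB {p : P | (↑p : WithTop P) ∈ D} b := by
  set D' := {p : P | (↑p : WithTop P) ∈ D} with hD'
  have hne' : D'.Nonempty := by
    obtain ⟨x, hx⟩ := hne
    cases x with
    | top => exact absurd hx htop
    | coe p => exact ⟨p, hx⟩
  obtain ⟨b, hb⟩ := hP D' hne' (directedOn_preimage_coe hdir htop)
  have : IsLUB D (↑b : WithTop P) := by
    rw [← image_preimage_coe htop]; exact isLUB_image_coe hb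
  exact ⟨b, ha.unique this, hb⟩

/-- Scott closed subsets of `P` give Scott closed subsets of `WithTop P`. -/
lemma scottClosed_image_coe (hP : DirectedComplete P) {A : Set P} (hA : ScottClosed A) :
    ScottClosed ((↑) '' A : Set (WithTop P)) := by
  constructor
  · rintro _ x hx ⟨a, ha, rfl⟩
    cases x with
    | top => simp at hx
    | coe p => exact ⟨p, hA.1 (WithTop.coe_le_coe.mp hx) ha, rfl⟩
  · intro D hD hne hdir a ha
    have htop : (⊤ : WithTop P) ∉ D := by
      intro h
      obtain ⟨p, _, hp⟩ := hD h
      simp at hp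
    obtain ⟨b, rfl, hb⟩ := lub_of_ne_top hP htop hne hdir ha
    refine ⟨b, hA.2 _ (fun p hp => ?_) ?_ (directedOn_preimage_coe hdir htop) b hb, rfl⟩
    · obtain ⟨q, hq, hq'⟩ := hD hp
      rwa [show q = p from WithTop.coe_injective hq'] at hq
    · obtain ⟨x, hx⟩ := hne
      cases x with
      | top => exact absurd hx htop
      | coe p => exact ⟨p, hx⟩

/-- Scott closed subsets of `WithTop P` not containing ⊤ restrict to Scott closed sets of `P`. -/
lemma scottClosed_preimage_coe {B : Set (WithTop P)} (hB : ScottClosed B) :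
    ScottClosed {p : P | (↑p : WithTop P) ∈ B} := by
  constructor
  · intro a b h ha
    exact hB.1 (WithTop.coe_le_coe.mpr h) ha
  · intro D hD hne hdir b hb
    have : IsLUB ((↑) '' D : Set (WithTop P)) (↑b) := isLUB_image_coe hb
    refine hB.2 _ ?_ (hne.image _) ?_ _ this
    · rintro _ ⟨d, hd, rfl⟩; exact hD hd
    · rintro _ ⟨p, hp, rfl⟩ _ ⟨q, hq, rfl⟩
      obtain ⟨z, hz, h1, h2⟩ := hdir p hp q hq
      exact ⟨↑z, ⟨z, hz, rfl⟩, WithTop.coe_le_coe.mpr h1, WithTop.coe_le_coe.mpr h2⟩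

section Sub
variable {Q : Type*} [PartialOrder Q] {F : Set Q}

lemma directedOn_image_val {D : Set F} (h : DirectedOn (· ≤ ·) D) :
    DirectedOn (· ≤ ·) (Subtype.val '' D) := by
  rintro _ ⟨p, hp, rfl⟩ _ ⟨q, hq, rfl⟩
  obtain ⟨z, hz, h1, h2⟩ := h p hp q hq
  exact ⟨z.1, ⟨z, hz, rfl⟩, h1, h2⟩

lemma directedOn_preimage_val {D : Set Q} (hD : D ⊆ F) (h : DirectedOn (· ≤ ·) D) :
    DirectedOn (· ≤ ·) {x : F | x.1 ∈ D} := by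
  rintro p hp q hq
  obtain ⟨z, hz, h1, h2⟩ := h p.1 hp q.1 hq
  exact ⟨⟨z, hD hz⟩, hz, h1, h2⟩

lemma isLUB_val_of_isLUB {D : Set F} {a : Q} (haF : a ∈ F)
    (h : IsLUB (Subtype.val '' D) a) : IsLUB D (⟨a, haF⟩ : F) := by
  constructor
  · intro d hd
    exact show d.1 ≤ a from h.1 ⟨d, hd, rfl⟩
  · intro u hu
    exact h.2 (by rintro _ ⟨d, hd, rfl⟩; exact hu hd)

/-- If every element outside `F` is a top element, lubs in `F` are lubs in `Q`. -/
lemma isLUB_image_val (htop : ∀ q ∉ F, ∀ q', q' ≤ q) {D : Set F} {c : F}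
    (h : IsLUB D c) : IsLUB (Subtype.val '' D) (c : Q) := by
  constructor
  · rintro _ ⟨d, hd, rfl⟩
    exact h.1 hd
  · intro u hu
    by_cases huF : u ∈ F
    · exact h.2 (fun d hd => show d.1 ≤ (⟨u, huF⟩ : F).1 from hu ⟨d, hd, rfl⟩)
    · exact htop u huF _

lemma scottClosed_preimage_val (hF : ScottClosed F) (htop : ∀ q ∉ F, ∀ q', q' ≤ q)
    {B : Set Q} (hB : ScottClosed B) : ScottClosed {x : F | x.1 ∈ B} := by
  constructor
  · intro a b h ha
    exact hB.1 h ha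
  · intro D hD hne hdir c hc
    refine hB.2 (Subtype.val '' D) ?_ (hne.image _) (directedOn_image_val hdir) _
      (isLUB_image_val htop hc)
    rintro _ ⟨d, hd, rfl⟩; exact hD hd

lemma scottClosed_image_val (hF : ScottClosed F) {A : Set F} (hA : ScottClosed A) :
    ScottClosed (Subtype.val '' A) := by
  constructor
  · rintro x y hxy ⟨a, ha, rfl⟩
    have hyF : y ∈ F := hF.1 hxy a.2
    exact ⟨⟨y, hyF⟩, hA.1 (show (⟨y, hyF⟩ : F) ≤ a from hxy) ha, rfl⟩
  · intro D hD hne hdir a ha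
    have hDF : D ⊆ F := by
      rintro d hd
      obtain ⟨x, hx, hx2⟩ := hD hd
      rw [← hx2]; exact x.2
    have haF : a ∈ F := hF.2 D hDF hne hdir a ha
    have himg : Subtype.val '' {x : F | x.1 ∈ D} = D := by
      ext q; constructor
      · rintro ⟨x, hx, rfl⟩; exact hx
      · intro hq; exact ⟨⟨q, hDF hq⟩, hq, rfl⟩
    have hlub : IsLUB {x : F | x.1 ∈ D} (⟨a, haF⟩ : F) :=
      isLUB_val_of_isLUB haF (by rwa [himg])
    obtain ⟨x, hx⟩ := hne
    refine ⟨⟨a, haF⟩, hA.2 _ (fun y hy => ?_) ⟨⟨x, hDF hx⟩, hx⟩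
      (directedOn_preimage_val hDF hdir) _ hlub, rfl⟩
    obtain ⟨z, hz, hz'⟩ := hD hy
    rwa [show z = y from Subtype.ext hz'] at hz

lemma directedComplete_subtype (hQ : DirectedComplete Q) (hF : ScottClosed F) :
    DirectedComplete F := by
  intro D hne hdir
  obtain ⟨x, hx⟩ := hne
  obtain ⟨a, ha⟩ := hQ (Subtype.val '' D) (Set.Nonempty.image _ ⟨x, hx⟩) (directedOn_image_val hdir)
  have haF : a ∈ F := hF.2 _ (by rintro _ ⟨d, hd, rfl⟩; exact d.2) (Set.Nonempty.image _ ⟨x, hx⟩)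
    (directedOn_image_val hdir) a ha
  exact ⟨⟨a, haF⟩, isLUB_val_of_isLUB haF ha⟩

end Sub

end Helpers

/-- If `P` is an SCL-faithful dcpo, so is `P` with a new top element adjoined. -/
theorem SCLFaithful_withTop {P : Type u} [PartialOrder P]
    (hP : DirectedComplete P) (hf : SCLFaithful P) : SCLFaithful (WithTop P) := by
  intro Q _ hQ φ
  classical
  -- the top element of `Cσ (WithTop P)`
  set UP : Cσ (WithTop P) := ⟨Set.univ, scottClosed_univ_s19⟩ with hUPdef
  -- the coatom `P` inside `Cσ (WithTop P)`
  have hPcSet : ((↑) '' (Set.univ : Set P) : Set (WithTop P)) = {x | x ≠ ⊤} := by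
    ext x
    cases x with
    | top => simp
    | coe p => simp
  set Pc : Cσ (WithTop P) :=
    ⟨{x | x ≠ ⊤}, hPcSet ▸ scottClosed_image_coe hP scottClosed_univ_s19⟩ with hPcdef
  -- every proper Scott closed subset of `WithTop P` is below `Pc`
  have hmaxP : ∀ A : Cσ (WithTop P), A ≠ UP → A ≤ Pc := by
    intro A hA
    show A.1 ⊆ {x | x ≠ ⊤}
    intro x hx
    rintro rfl
    exact hA (Subtype.ext (Set.eq_univ_iff_forall.mpr fun y => A.2.1 le_top hx))
  -- `φ UP` is the whole of `Q`
  have hUQ : (φ UP).1 = Set.univ := by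
    have h1 : φ.symm ⟨Set.univ, scottClosed_univ_s19⟩ ≤ UP := by
      show (φ.symm ⟨Set.univ, scottClosed_univ_s19⟩).1 ⊆ Set.univ
      exact Set.subset_univ _
    have h2 := φ.monotone h1
    rw [φ.apply_symm_apply] at h2
    exact Set.eq_univ_of_univ_subset h2
  set F₀ : Cσ Q := φ Pc with hF₀def
  -- every proper Scott closed subset of `Q` is below `F₀`
  have hmaxQ : ∀ B : Cσ Q, B ≠ φ UP → B ≤ F₀ := by
    intro B hB
    have : φ.symm B ≠ UP := fun h => hB (by rw [← φ.apply_symm_apply B, h])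
    have := φ.monotone (hmaxP _ this)
    rwa [φ.apply_symm_apply] at this
  -- each element outside `F₀` is a top element of `Q`
  have htopQ : ∀ q ∉ F₀.1, ∀ q', q' ≤ q := by
    intro q hq q'
    by_cases h : (⟨Set.Iic q, scottClosed_Iic_s19 q⟩ : Cσ Q) = φ UP
    · have : Set.Iic q = Set.univ := by
        have := congrArg Subtype.val h
        simpa [hUQ] using this
      exact this.symm ▸ Set.mem_univ q' |>.out
    · exact absurd (hmaxQ _ h (Set.mem_Iic.mpr le_rfl)) hq
  -- `F₀` is proper, so there is a top element `t`
  have hF₀ne : F₀.1 ≠ Set.univ := by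
    intro h
    have : Pc = UP := φ.injective (Subtype.ext (h.trans hUQ.symm))
    have := congrArg Subtype.val this
    have h2 : (⊤ : WithTop P) ∈ ({x : WithTop P | x ≠ ⊤}) := by
      rw [show ({x : WithTop P | x ≠ ⊤}) = Pc.1 from rfl, this]; trivial
    exact h2 rfl
  obtain ⟨t, ht⟩ := Set.ne_univ_iff_exists_notMem _ |>.mp hF₀ne
  have htQtop : ∀ q', q' ≤ t := htopQ t ht
  have hcompl : ∀ q, q ∉ F₀.1 → q = t := fun q hq => le_antisymm (htQtop q) (htopQ q hq t)
  -- the Scott closed sets of `P` and of `F₀` are isomorphic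
  have hLPc : ∀ A : Cσ P,
      (⟨(↑) '' A.1, scottClosed_image_coe hP A.2⟩ : Cσ (WithTop P)) ≤ Pc := by
    rintro A _ ⟨p, _, rfl⟩
    exact WithTop.coe_ne_top
  have hMF : ∀ B : Cσ (↥F₀.1),
      (⟨Subtype.val '' B.1, scottClosed_image_val F₀.2 B.2⟩ : Cσ Q) ≤ F₀ := by
    rintro B _ ⟨x, _, rfl⟩
    exact x.2
  have hφL : ∀ A : Cσ P, (φ ⟨(↑) '' A.1, scottClosed_image_coe hP A.2⟩).1 ⊆ F₀.1 :=
    fun A => φ.monotone (hLPc A)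
  have hsymmM : ∀ B : Cσ (↥F₀.1), (⊤ : WithTop P) ∉
      (φ.symm ⟨Subtype.val '' B.1, scottClosed_image_val F₀.2 B.2⟩).1 := by
    intro B htop
    have h1 : φ.symm ⟨Subtype.val '' B.1, scottClosed_image_val F₀.2 B.2⟩ ≤ Pc := by
      have := φ.symm.monotone (hMF B)
      rwa [show φ.symm F₀ = Pc from φ.symm_apply_apply Pc] at this
    exact h1 htop rfl
  let ψ : Cσ P ≃o Cσ (↥F₀.1) :=
    { toFun := fun A => ⟨{x : ↥F₀.1 | x.1 ∈ (φ ⟨(↑) '' A.1, scottClosed_image_coe hP A.2⟩).1},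
        scottClosed_preimage_val F₀.2 htopQ (φ _).2⟩
      invFun := fun B => ⟨{p : P | (↑p : WithTop P) ∈
          (φ.symm ⟨Subtype.val '' B.1, scottClosed_image_val F₀.2 B.2⟩).1},
        scottClosed_preimage_coe (φ.symm _).2⟩
      left_inv := by
        intro A
        apply Subtype.ext
        show {p : P | (↑p : WithTop P) ∈ (φ.symm ⟨Subtype.val ''
            {x : ↥F₀.1 | x.1 ∈ (φ ⟨(↑) '' A.1, scottClosed_image_coe hP A.2⟩).1},
            scottClosed_image_val F₀.2 (scottClosed_preimage_val F₀.2 htopQ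
              (φ ⟨(↑) '' A.1, scottClosed_image_coe hP A.2⟩).2)⟩).1} = A.1
        have himg : Subtype.val ''
            {x : ↥F₀.1 | x.1 ∈ (φ ⟨(↑) '' A.1, scottClosed_image_coe hP A.2⟩).1}
            = (φ ⟨(↑) '' A.1, scottClosed_image_coe hP A.2⟩).1 := by
          ext q
          constructor
          · rintro ⟨x, hx, rfl⟩; exact hx
          · intro hq; exact ⟨⟨q, hφL A hq⟩, hq, rfl⟩
        have : (⟨Subtype.val ''
            {x : ↥F₀.1 | x.1 ∈ (φ ⟨(↑) '' A.1, scottClosed_image_coe hP A.2⟩).1},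
            scottClosed_image_val F₀.2 (scottClosed_preimage_val F₀.2 htopQ
              (φ ⟨(↑) '' A.1, scottClosed_image_coe hP A.2⟩).2)⟩ : Cσ Q)
            = φ ⟨(↑) '' A.1, scottClosed_image_coe hP A.2⟩ := Subtype.ext himg
        rw [this, φ.symm_apply_apply]
        ext p
        simp [WithTop.coe_injective.eq_iff]
      right_inv := by
        intro B
        apply Subtype.ext
        show {x : ↥F₀.1 | x.1 ∈ (φ ⟨(↑) '' {p : P | (↑p : WithTop P) ∈
            (φ.symm ⟨Subtype.val '' B.1, scottClosed_image_val F₀.2 B.2⟩).1},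
            scottClosed_image_coe hP (scottClosed_preimage_coe
              (φ.symm ⟨Subtype.val '' B.1, scottClosed_image_val F₀.2 B.2⟩).2)⟩).1} = B.1
        have himg : (↑) '' {p : P | (↑p : WithTop P) ∈
            (φ.symm ⟨Subtype.val '' B.1, scottClosed_image_val F₀.2 B.2⟩).1}
            = (φ.symm ⟨Subtype.val '' B.1, scottClosed_image_val F₀.2 B.2⟩).1 :=
          image_preimage_coe (hsymmM B)
        have : (⟨(↑) '' {p : P | (↑p : WithTop P) ∈
            (φ.symm ⟨Subtype.val '' B.1, scottClosed_image_val F₀.2 B.2⟩).1},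
            scottClosed_image_coe hP (scottClosed_preimage_coe
              (φ.symm ⟨Subtype.val '' B.1, scottClosed_image_val F₀.2 B.2⟩).2)⟩ : Cσ (WithTop P))
            = φ.symm ⟨Subtype.val '' B.1, scottClosed_image_val F₀.2 B.2⟩ := Subtype.ext himg
        rw [this, φ.apply_symm_apply]
        ext x
        constructor
        · rintro ⟨y, hy, h⟩
          rwa [show y = x from Subtype.ext h] at hy
        · intro hx
          exact ⟨x, hx, rfl⟩
      map_rel_iff' := by
        intro A A'
        constructor
        · intro h
          have h1 : (φ ⟨(↑) '' A.1, scottClosed_image_coe hP A.2⟩).1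
              ⊆ (φ ⟨(↑) '' A'.1, scottClosed_image_coe hP A'.2⟩).1 := by
            intro q hq
            exact h (show (⟨q, hφL A hq⟩ : ↥F₀.1) ∈ _ from hq)
          have h2 : (⟨(↑) '' A.1, scottClosed_image_coe hP A.2⟩ : Cσ (WithTop P))
              ≤ ⟨(↑) '' A'.1, scottClosed_image_coe hP A'.2⟩ := φ.le_iff_le.mp h1
          intro p hp
          obtain ⟨p', hp', hpp'⟩ := h2 ⟨p, hp, rfl⟩
          rwa [show p' = p from WithTop.coe_injective hpp'] at hp'
        · intro h
          have h2 : (⟨(↑) '' A.1, scottClosed_image_coe hP A.2⟩ : Cσ (WithTop P))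
              ≤ ⟨(↑) '' A'.1, scottClosed_image_coe hP A'.2⟩ := by
            rintro _ ⟨p, hp, rfl⟩
            exact ⟨p, h hp, rfl⟩
          intro x hx
          exact φ.monotone h2 hx }
  obtain ⟨e⟩ := hf (↥F₀.1) (directedComplete_subtype hQ F₀.2) ψ
  refine ⟨{ toFun := fun x => WithTop.recTopCoe t (fun p => (e p).1) x
            invFun := fun q => if h : q ∈ F₀.1 then ↑(e.symm ⟨q, h⟩) else ⊤
            left_inv := ?_
            right_inv := ?_
            map_rel_iff' := ?_ }⟩
  · intro x
    cases x with
    | top => simp [ht]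
    | coe p => simp
  · intro q
    by_cases h : q ∈ F₀.1
    · simp [h]
    · simp [h, (hcompl q h).symm]
  · intro a b
    cases a with
    | top =>
      cases b with
      | top => simp
      | coe p =>
        simp only [WithTop.recTopCoe_top, WithTop.recTopCoe_coe, Equiv.coe_fn_mk]
        refine iff_of_false (fun hle => ?_) (by simp)
        exact ht (le_antisymm hle (htQtop _) ▸ (e p).2)
    | coe p =>
      cases b with
      | top =>
        simp only [WithTop.recTopCoe_top, WithTop.recTopCoe_coe, Equiv.coe_fn_mk]
        exact iff_of_true (htQtop _) le_top
      | coe p' =>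
        simp only [WithTop.recTopCoe_coe, Equiv.coe_fn_mk]
        rw [WithTop.coe_le_coe, ← e.le_iff_le]
        exact Subtype.coe_le_coe
end
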